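/- arXiv:2404.06495 — 10 statements merged into one kernel-verified Lean document; each statement's English description precedes it below -/
import Mathlib

section
/- In the Prooφ mechanism, suppose an allocated user i (one whose task is among the S̄_ℓ highest-fee tasks) changes its bid from f_i to some f with f ≥ f_{S̄_ℓ+1}, while all other bids are unchanged. Then after re-sorting bids, the number of allocated provers ℓ' equals ℓ, user i's task is still among the S̄_ℓ allocated tasks, and the payment charged to allocated users, f'_{S̄_ℓ+1}, equals f_{S̄_ℓ+1}. Hence user i's utility is unchanged. -/
lemma proofee_count_bridge (n : ℕ) (g : ℕ → ℝ) (p : ℝ → Prop) [DecidablePred p] :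
    Multiset.countP p ((Finset.Icc 1 n).val.map g) =
      ((Finset.Icc 1 n).filter (fun j => p (g j))).card := by
  rw [Multiset.countP_map]
  rfl

lemma proofee_sorted_ge_of_count (n : ℕ) (g : ℕ → ℝ)
    (hg : ∀ a b, 1 ≤ a → a ≤ b → b ≤ n → g b ≤ g a)
    (c : ℝ) (k : ℕ) (h1 : 1 ≤ k) (hn : k ≤ n)
    (h : k ≤ ((Finset.Icc 1 n).filter (fun j => c ≤ g j)).card) : c ≤ g k := by
  by_contra hc
  push_neg at hc
  have hsub : (Finset.Icc 1 n).filter (fun j => c ≤ g j) ⊆ Finset.Icc 1 (k - 1) := by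
    intro j hj
    simp only [Finset.mem_filter, Finset.mem_Icc] at hj ⊢
    refine ⟨hj.1.1, ?_⟩
    by_contra hjk
    push_neg at hjk
    have : g j ≤ g k := hg k j h1 (by omega) hj.1.2
    linarith [hj.2]
  have := Finset.card_le_card hsub
  rw [Nat.card_Icc] at this
  omega

lemma proofee_count_ge_of_sorted (n : ℕ) (g : ℕ → ℝ)
    (hg : ∀ a b, 1 ≤ a → a ≤ b → b ≤ n → g b ≤ g a)
    (c : ℝ) (k : ℕ) (h1 : 1 ≤ k) (hn : k ≤ n) (h : c < g k) :
    k ≤ ((Finset.Icc 1 n).filter (fun j => c < g j)).card := by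
  have hsub : Finset.Icc 1 k ⊆ (Finset.Icc 1 n).filter (fun j => c < g j) := by
    intro j hj
    simp only [Finset.mem_Icc] at hj
    simp only [Finset.mem_filter, Finset.mem_Icc]
    exact ⟨⟨hj.1, le_trans hj.2 hn⟩, lt_of_lt_of_le h (hg j k hj.1 hj.2 hn)⟩
  have := Finset.card_le_card hsub
  rw [Nat.card_Icc] at this
  omega

lemma proofee_count_le_of_bound (n m : ℕ) (g : ℕ → ℝ) (c : ℝ)
    (h : ∀ j, 1 ≤ j → j ≤ n → c < g j → j ≤ m) :
    ((Finset.Icc 1 n).filter (fun j => c < g j)).card ≤ m := by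
  have hsub : (Finset.Icc 1 n).filter (fun j => c < g j) ⊆ Finset.Icc 1 m := by
    intro j hj
    simp only [Finset.mem_filter, Finset.mem_Icc] at hj ⊢
    exact ⟨hj.1.1, h j hj.1.1 hj.1.2 hj.2⟩
  have := Finset.card_le_card hsub
  rw [Nat.card_Icc] at this
  omega

/-- **Prooφ, UDSIC proof, Case 1.1.**  An allocated user `i` (rank `i ≤ Sbar ℓ`)
changes its bid from `f i` to `fnew ≥ f (Sbar ℓ + 1)`, the bids are re-sorted
to `f'` (same multiset with `f i` replaced by `fnew`), and `ℓ'` is the new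
number of allocated provers.  Then `ℓ' = ℓ`, user `i`'s task is still among
the `Sbar ℓ` allocated tasks, the charge `f' (Sbar ℓ + 1)` is unchanged,
and hence user `i`'s utility is unchanged. -/
theorem proofee_udsic_case_allocated_high_bid
    (n N : ℕ) (f : ℕ → ℝ) (s : ℕ → ℕ) (p : ℕ → ℝ)
    (hf : ∀ a b, 1 ≤ a → a ≤ b → b ≤ n → f b ≤ f a)
    (hp : ∀ a b, 1 ≤ a → a ≤ b → b ≤ N → p a ≤ p b)
    (hs : ∀ j, 1 ≤ j → j ≤ N → 0 < s j)
    (Sbar : ℕ → ℕ) (hSbar : ∀ j, Sbar j = ∑ k ∈ Finset.Icc 1 j, s k)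
    (ℓ : ℕ) (hℓ1 : 1 ≤ ℓ) (hℓN : ℓ + 1 ≤ N) (hSn : Sbar ℓ + 1 ≤ n)
    (hℓ : p (ℓ + 1) ≤ f (Sbar ℓ + 1))
    (hℓmax : ∀ j, ℓ < j → j + 1 ≤ N → Sbar j + 1 ≤ n →
      f (Sbar j + 1) < p (j + 1))
    -- the deviating allocated user and its new bid
    (i : ℕ) (hi1 : 1 ≤ i) (hiS : i ≤ Sbar ℓ)
    (fnew : ℝ) (hfnew : f (Sbar ℓ + 1) ≤ fnew)
    -- re-sorted bid sequence after the deviation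
    (f' : ℕ → ℝ)
    (hf' : ∀ a b, 1 ≤ a → a ≤ b → b ≤ n → f' b ≤ f' a)
    (hmul : (Finset.Icc 1 n).val.map f' =
      fnew ::ₘ ((Finset.Icc 1 n).val.map f).erase (f i))
    -- the new number of allocated provers
    (ℓ' : ℕ) (hℓ'1 : 1 ≤ ℓ') (hℓ'N : ℓ' + 1 ≤ N) (hS'n : Sbar ℓ' + 1 ≤ n)
    (hℓ' : p (ℓ' + 1) ≤ f' (Sbar ℓ' + 1))
    (hℓ'max : ∀ j, ℓ' < j → j + 1 ≤ N → Sbar j + 1 ≤ n →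
      f' (Sbar j + 1) < p (j + 1)) :
    ℓ' = ℓ ∧
    (∃ k, 1 ≤ k ∧ k ≤ Sbar ℓ ∧ f' k = fnew) ∧
    f' (Sbar ℓ + 1) = f (Sbar ℓ + 1) ∧
    f i - f' (Sbar ℓ + 1) = f i - f (Sbar ℓ + 1) := by
  have hfiM : f (Sbar ℓ + 1) ≤ f i := hf i (Sbar ℓ + 1) hi1 (by omega) hSn
  have hfiA : f i ∈ (Finset.Icc 1 n).val.map f :=
    Multiset.mem_map.2 ⟨i, by simp only [Finset.mem_Icc, Finset.mem_val]; omega, rfl⟩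
  -- key counting identity
  have key : ∀ (q : ℝ → Prop) [DecidablePred q],
      ((Finset.Icc 1 n).filter (fun j => q (f' j))).card + (if q (f i) then 1 else 0)
        = ((Finset.Icc 1 n).filter (fun j => q (f j))).card + (if q fnew then 1 else 0) := by
    intro q _
    rw [← proofee_count_bridge, ← proofee_count_bridge, hmul]
    conv_rhs => rw [← Multiset.cons_erase hfiA]
    rw [Multiset.countP_cons, Multiset.countP_cons]
    ring
  -- the tail of the sorted sequence is unchanged
  have hA : ∀ k, Sbar ℓ + 1 ≤ k → k ≤ n → f' k = f k := by
    intro k hk1 hk2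
    have hk1' : 1 ≤ k := by omega
    have hfk : f k ≤ f (Sbar ℓ + 1) := hf (Sbar ℓ + 1) k (by omega) hk1 hk2
    have h1 : f k ≤ f' k := by
      apply proofee_sorted_ge_of_count n f' hf' (f k) k hk1' hk2
      have hcount : k ≤ ((Finset.Icc 1 n).filter (fun j => f k ≤ f j)).card := by
        have hsub : Finset.Icc 1 k ⊆ (Finset.Icc 1 n).filter (fun j => f k ≤ f j) := by
          intro j hj
          simp only [Finset.mem_Icc] at hj
          simp only [Finset.mem_filter, Finset.mem_Icc]
          exact ⟨⟨hj.1, le_trans hj.2 hk2⟩, hf j k hj.1 hj.2 hk2⟩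
        have := Finset.card_le_card hsub
        rw [Nat.card_Icc] at this
        omega
      have hkey := key (fun x => f k ≤ x)
      rw [if_pos (le_trans hfk hfiM), if_pos (le_trans hfk hfnew)] at hkey
      omega
    have h2 : f' k ≤ f k := by
      by_contra hc
      push_neg at hc
      have hge := proofee_count_ge_of_sorted n f' hf' (f k) k hk1' hk2 hc
      have hkey := key (fun x => f k < x)
      by_cases hfi : f k < f i
      · have hbound : ((Finset.Icc 1 n).filter (fun j => f k < f j)).card ≤ k - 1 := by
          apply proofee_count_le_of_bound
          intro j hj1 hj2 hjgt
          by_contra hj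
          push_neg at hj
          have := hf k j hk1' (by omega) hj2
          linarith
        rw [if_pos hfi] at hkey
        split_ifs at hkey <;> omega
      · push_neg at hfi
        have hfieq : f i = f k := le_antisymm hfi (le_trans hfk hfiM)
        have hbound : ((Finset.Icc 1 n).filter (fun j => f k < f j)).card ≤ i - 1 := by
          apply proofee_count_le_of_bound
          intro j hj1 hj2 hjgt
          by_contra hj
          push_neg at hj
          have := hf i j hi1 (by omega) hj2
          rw [hfieq] at this
          linarith
        rw [if_neg (show ¬ f k < f i by rw [hfieq]; exact lt_irrefl _)] at hkey
        split_ifs at hkey <;> omega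
    linarith
  have ha : f' (Sbar ℓ + 1) = f (Sbar ℓ + 1) := hA _ le_rfl hSn
  -- monotonicity of Sbar
  have hmono : ∀ a b : ℕ, a ≤ b → Sbar a ≤ Sbar b := by
    intro a b hab
    rw [hSbar, hSbar]
    exact Finset.sum_le_sum_of_subset (Finset.Icc_subset_Icc_right hab)
  -- ℓ' = ℓ
  have hll : ℓ' = ℓ := by
    rcases lt_trichotomy ℓ' ℓ with h | h | h
    · exfalso
      have := hℓ'max ℓ h hℓN hSn
      rw [ha] at this
      linarith
    · exact h
    · exfalso
      have h1 := hℓmax ℓ' h hℓ'N hS'n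
      have h2 : f' (Sbar ℓ' + 1) = f (Sbar ℓ' + 1) :=
        hA _ (by have := hmono ℓ ℓ' (le_of_lt h); omega) hS'n
      rw [h2] at hℓ'
      linarith
  -- the new bid lands among the top Sbar ℓ positions
  have hex : ∃ k, 1 ≤ k ∧ k ≤ Sbar ℓ ∧ f' k = fnew := by
    have hmem : fnew ∈ (Finset.Icc 1 n).val.map f' := by
      rw [hmul]; exact Multiset.mem_cons_self _ _
    obtain ⟨j, hj, hjf⟩ := Multiset.mem_map.1 hmem
    have hj' : 1 ≤ j ∧ j ≤ n := by simpa only [Finset.mem_val, Finset.mem_Icc] using hj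
    have hM1 : 1 ≤ Sbar ℓ := le_trans hi1 hiS
    rcases eq_or_lt_of_le hfnew with heq | hlt
    · refine ⟨Sbar ℓ, hM1, le_rfl, ?_⟩
      have hub : f' (Sbar ℓ) ≤ f (Sbar ℓ + 1) := by
        by_contra hc
        push_neg at hc
        have hge := proofee_count_ge_of_sorted n f' hf' (f (Sbar ℓ + 1)) (Sbar ℓ)
          hM1 (by omega) hc
        have hkey := key (fun x => f (Sbar ℓ + 1) < x)
        rw [if_neg (show ¬ f (Sbar ℓ + 1) < fnew by rw [← heq]; exact lt_irrefl _)] at hkey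
        by_cases hfi : f (Sbar ℓ + 1) < f i
        · have hbound : ((Finset.Icc 1 n).filter (fun j => f (Sbar ℓ + 1) < f j)).card
              ≤ Sbar ℓ := by
            apply proofee_count_le_of_bound
            intro j hj1 hj2 hjgt
            by_contra hjc
            push_neg at hjc
            have := hf (Sbar ℓ + 1) j (by omega) (by omega) hj2
            linarith
          rw [if_pos hfi] at hkey
          omega
        · push_neg at hfi
          have hfieq : f i = f (Sbar ℓ + 1) := le_antisymm hfi hfiM
          have hbound : ((Finset.Icc 1 n).filter (fun j => f (Sbar ℓ + 1) < f j)).card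
              ≤ i - 1 := by
            apply proofee_count_le_of_bound
            intro j hj1 hj2 hjgt
            by_contra hjc
            push_neg at hjc
            have := hf i j hi1 (by omega) hj2
            rw [hfieq] at this
            linarith
          rw [if_neg (show ¬ f (Sbar ℓ + 1) < f i by rw [hfieq]; exact lt_irrefl _)] at hkey
          omega
      have hlb : f (Sbar ℓ + 1) ≤ f' (Sbar ℓ) := by
        rw [← ha]
        exact hf' (Sbar ℓ) (Sbar ℓ + 1) hM1 (by omega) hSn
      rw [le_antisymm hub hlb, heq]
    · refine ⟨j, hj'.1, ?_, hjf⟩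
      by_contra hjc
      push_neg at hjc
      have : f' j ≤ f' (Sbar ℓ + 1) := hf' (Sbar ℓ + 1) j (by omega) (by omega) hj'.2
      rw [ha, hjf] at this
      linarith
  exact ⟨hll, hex, ha, by rw [ha]⟩
end

section
/- In the Prooφ mechanism, suppose an allocated user i changes its bid from f_i to some f with f < f_{S̄_ℓ+1}, all other bids unchanged. Then in the new sorted sequence, user i's task has rank strictly greater than S̄_ℓ, the new number of allocated provers ℓ' satisfies ℓ' ≤ ℓ, and user i's task is not allocated, so user i's utility after the deviation is 0. -/
/-!
For a sequence `g` antitone on `[1, n]`, at least `m` of its values exceed `t` iff `t < g m`, so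
sorted bid sequences are compared through counts of bids above a threshold. Replacing one bid by
a smaller one lowers each such count by at most one and raises none. The first fact leaves
`Sbar ℓ` new bids above `fnew`; the second gives `f' ≤ f` pointwise, so the maximality of `ℓ`
for `f` forces `ℓ' ≤ ℓ`, hence `Sbar ℓ' ≤ Sbar ℓ`.
-/

namespace Multiset

variable {α : Type*} (p : α → Prop) [DecidablePred p] [DecidableEq α]

theorem countP_le_countP_cons_erase_add_one (M : Multiset α) (a b : α) :
    countP p M ≤ countP p (b ::ₘ M.erase a) + 1 :=
  calc countP p M ≤ countP p (a ::ₘ M.erase a) := countP_le_of_le p (le_cons_erase M a)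
    _ ≤ countP p (M.erase a) + 1 := by rw [countP_cons]; split_ifs <;> omega
    _ ≤ countP p (b ::ₘ M.erase a) + 1 := by rw [countP_cons]; omega

theorem countP_cons_erase_le {M : Multiset α} {a : α} (ha : a ∈ M) (b : α) (hab : p b → p a) :
    countP p (b ::ₘ M.erase a) ≤ countP p M := by
  conv_rhs => rw [← cons_erase ha]
  rw [countP_cons, countP_cons]
  split_ifs <;> simp_all

end Multiset

section AntitoneCounting

variable {n : ℕ} {g g' : ℕ → ℝ}

theorem le_countP_lt_map_Icc_iff (hg : AntitoneOn g (Set.Icc 1 n)) {m : ℕ}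
    (hm : m ∈ Set.Icc 1 n) (t : ℝ) :
    m ≤ ((Finset.Icc 1 n).val.map g).countP (t < ·) ↔ t < g m := by
  obtain ⟨hm1, hmn⟩ := hm
  rw [Multiset.countP_map, ← Finset.filter_val, Finset.card_val]
  constructor
  · intro hc
    by_contra! hgm
    have hsub : (Finset.Icc 1 n).filter (t < g ·) ⊆ Finset.Icc 1 (m - 1) := by
      intro j hj
      simp only [Finset.mem_filter, Finset.mem_Icc] at hj ⊢
      refine ⟨hj.1.1, Nat.le_sub_one_of_lt (lt_of_not_ge fun hmj => ?_)⟩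
      exact hj.2.not_ge ((hg ⟨hm1, hmn⟩ ⟨hj.1.1, hj.1.2⟩ hmj).trans hgm)
    have := Finset.card_le_card hsub
    simp only [Nat.card_Icc] at this
    omega
  · intro ht
    have hsub : Finset.Icc 1 m ⊆ (Finset.Icc 1 n).filter (t < g ·) := by
      intro j hj
      simp only [Finset.mem_filter, Finset.mem_Icc] at hj ⊢
      exact ⟨⟨hj.1, hj.2.trans hmn⟩, ht.trans_le (hg ⟨hj.1, hj.2.trans hmn⟩ ⟨hm1, hmn⟩ hj.2)⟩
    simpa using Finset.card_le_card hsub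

theorem le_of_map_Icc_eq_cons_erase (hg : AntitoneOn g (Set.Icc 1 n))
    (hg' : AntitoneOn g' (Set.Icc 1 n)) {a b : ℝ} (ha : a ∈ (Finset.Icc 1 n).val.map g)
    (hba : b ≤ a) (hmap : (Finset.Icc 1 n).val.map g' = b ::ₘ ((Finset.Icc 1 n).val.map g).erase a)
    {m : ℕ} (hm : m ∈ Set.Icc 1 n) : g' m ≤ g m := by
  by_contra! hlt
  have hcount := Multiset.countP_cons_erase_le (g m < ·) ha b fun h => h.trans_le hba
  rw [← hmap] at hcount
  exact lt_irrefl (g m) <| (le_countP_lt_map_Icc_iff hg hm _).1 <|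
    ((le_countP_lt_map_Icc_iff hg' hm _).2 hlt).trans hcount

end AntitoneCounting

theorem proofee_udsic_case_allocated_low_bid_general
    (n N : ℕ) (f : ℕ → ℝ) (s : ℕ → ℕ) (p : ℕ → ℝ)
    (hf : ∀ a b, 1 ≤ a → a ≤ b → b ≤ n → f b ≤ f a)
    (Sbar : ℕ → ℕ) (hSbar : ∀ j, Sbar j = ∑ k ∈ Finset.Icc 1 j, s k)
    (ℓ : ℕ) (hSn : Sbar ℓ + 1 ≤ n)
    (hℓmax : ∀ j, ℓ < j → j + 1 ≤ N → Sbar j + 1 ≤ n →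
      f (Sbar j + 1) < p (j + 1))
    -- the deviating allocated user and its new bid
    (i : ℕ) (hi1 : 1 ≤ i) (hiS : i ≤ Sbar ℓ)
    (fnew : ℝ) (hfnew : fnew < f (Sbar ℓ + 1))
    -- re-sorted bid sequence after the deviation
    (f' : ℕ → ℝ)
    (hf' : ∀ a b, 1 ≤ a → a ≤ b → b ≤ n → f' b ≤ f' a)
    (hmul : (Finset.Icc 1 n).val.map f' =
      fnew ::ₘ ((Finset.Icc 1 n).val.map f).erase (f i))
    -- the new number of allocated provers
    (ℓ' : ℕ) (hℓ'N : ℓ' + 1 ≤ N) (hS'n : Sbar ℓ' + 1 ≤ n)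
    (hℓ' : p (ℓ' + 1) ≤ f' (Sbar ℓ' + 1)) :
    (∀ k, 1 ≤ k → k ≤ Sbar ℓ → fnew < f' k) ∧
    ℓ' ≤ ℓ ∧
    (∀ k, 1 ≤ k → k ≤ Sbar ℓ' → fnew < f' k) := by
  have hfA : AntitoneOn f (Set.Icc 1 n) := fun a ha b hb hab => hf a b ha.1 hab hb.2
  have hf'A : AntitoneOn f' (Set.Icc 1 n) := fun a ha b hb hab => hf' a b ha.1 hab hb.2
  have hfi_mem : f i ∈ (Finset.Icc 1 n).val.map f :=
    Multiset.mem_map_of_mem f (Finset.mem_Icc.2 ⟨hi1, by omega⟩)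
  have hfnew_lt : ∀ k, 1 ≤ k → k ≤ Sbar ℓ → fnew < f' k := by
    intro k hk1 hk
    have hold := (le_countP_lt_map_Icc_iff hfA ⟨by omega, hSn⟩ fnew).2 hfnew
    have hdrop := Multiset.countP_le_countP_cons_erase_add_one (fnew < ·)
      ((Finset.Icc 1 n).val.map f) (f i) fnew
    rw [← hmul] at hdrop
    exact (le_countP_lt_map_Icc_iff hf'A ⟨hk1, by omega⟩ fnew).1 (by omega)
  have hℓ'_le : ℓ' ≤ ℓ := by
    by_contra! hlt
    have hdom := le_of_map_Icc_eq_cons_erase hfA hf'A hfi_mem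
      (hfnew.le.trans (hf i _ hi1 (by omega) hSn)) hmul ⟨by omega, hS'n⟩
    exact (hℓmax ℓ' hlt hℓ'N hS'n).not_ge (hℓ'.trans hdom)
  have hSbar_le : Sbar ℓ' ≤ Sbar ℓ := by
    rw [hSbar, hSbar]
    exact Finset.sum_le_sum_of_subset (Finset.Icc_subset_Icc_right hℓ'_le)
  exact ⟨hfnew_lt, hℓ'_le, fun k hk1 hk => hfnew_lt k hk1 (hk.trans hSbar_le)⟩

/-- **Prooφ, UDSIC proof, Case 1.2.**  An allocated user `i` (rank `i ≤ Sbar ℓ`)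
changes its bid to `fnew < f (Sbar ℓ + 1)`.  In the re-sorted sequence user
`i`'s task has rank strictly greater than `Sbar ℓ` (every task at a position
`≤ Sbar ℓ` has fee strictly above `fnew`), the new number of allocated provers
satisfies `ℓ' ≤ ℓ`, and the task is not allocated (so the deviating user's
utility is `0`). -/
theorem proofee_udsic_case_allocated_low_bid
    (n N : ℕ) (f : ℕ → ℝ) (s : ℕ → ℕ) (p : ℕ → ℝ)
    (hf : ∀ a b, 1 ≤ a → a ≤ b → b ≤ n → f b ≤ f a)
    (hp : ∀ a b, 1 ≤ a → a ≤ b → b ≤ N → p a ≤ p b)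
    (hs : ∀ j, 1 ≤ j → j ≤ N → 0 < s j)
    (Sbar : ℕ → ℕ) (hSbar : ∀ j, Sbar j = ∑ k ∈ Finset.Icc 1 j, s k)
    (ℓ : ℕ) (hℓ1 : 1 ≤ ℓ) (hℓN : ℓ + 1 ≤ N) (hSn : Sbar ℓ + 1 ≤ n)
    (hℓ : p (ℓ + 1) ≤ f (Sbar ℓ + 1))
    (hℓmax : ∀ j, ℓ < j → j + 1 ≤ N → Sbar j + 1 ≤ n →
      f (Sbar j + 1) < p (j + 1))
    -- the deviating allocated user and its new bid
    (i : ℕ) (hi1 : 1 ≤ i) (hiS : i ≤ Sbar ℓ)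
    (fnew : ℝ) (hfnew : fnew < f (Sbar ℓ + 1))
    -- re-sorted bid sequence after the deviation
    (f' : ℕ → ℝ)
    (hf' : ∀ a b, 1 ≤ a → a ≤ b → b ≤ n → f' b ≤ f' a)
    (hmul : (Finset.Icc 1 n).val.map f' =
      fnew ::ₘ ((Finset.Icc 1 n).val.map f).erase (f i))
    -- the new number of allocated provers
    (ℓ' : ℕ) (hℓ'1 : 1 ≤ ℓ') (hℓ'N : ℓ' + 1 ≤ N) (hS'n : Sbar ℓ' + 1 ≤ n)
    (hℓ' : p (ℓ' + 1) ≤ f' (Sbar ℓ' + 1))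
    (hℓ'max : ∀ j, ℓ' < j → j + 1 ≤ N → Sbar j + 1 ≤ n →
      f' (Sbar j + 1) < p (j + 1)) :
    (∀ k, 1 ≤ k → k ≤ Sbar ℓ → fnew < f' k) ∧
    ℓ' ≤ ℓ ∧
    (∀ k, 1 ≤ k → k ≤ Sbar ℓ' → fnew < f' k) :=
  proofee_udsic_case_allocated_low_bid_general n N f s p hf Sbar hSbar ℓ hSn hℓmax i hi1 hiS fnew
    hfnew f' hf' hmul ℓ' hℓ'N hS'n hℓ'
end

section
/- The Prooφ mechanism is user dominant-strategy incentive compatible: for every user i, bidding its true value f_i weakly maximizes its utility over all possible alternative bids f, holding all other user bids and all prover bids fixed. -/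
private lemma sorted_map_range' (h : ℕ → ℝ) (a m n : ℕ)
    (ha : 1 ≤ a) (hmn : a + m ≤ n + 1)
    (hh : ∀ x y, 1 ≤ x → x ≤ y → y ≤ n → h y ≤ h x) :
    ((List.range' a m).map h).Pairwise (· ≥ ·) := by
  rw [List.pairwise_map, List.pairwise_iff_getElem]
  intro p q hp hq hpq
  simp only [List.length_range'] at hp hq
  rw [List.getElem_range', List.getElem_range']
  exact hh (a + 1 * p) (a + 1 * q) (by omega) (by omega) (by omega)

private lemma split_range' (t n : ℕ) (ht1 : 1 ≤ t) (htn : t ≤ n) :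
    List.range' 1 n = List.range' 1 (t - 1) ++ t :: List.range' (t + 1) (n - t) := by
  have h1 : t :: List.range' (t + 1) (n - t) = List.range' t (n - t + 1) :=
    (List.range'_succ (s := t) (n := n - t) (step := 1)).symm
  rw [h1]
  have h2 : List.range' 1 (t - 1) ++ List.range' (1 + (t - 1)) (n - t + 1) =
      List.range' 1 (n - t + 1 + (t - 1)) := by rw [List.range'_append_1]; congr 1; omega
  have h3 : 1 + (t - 1) = t := by omega
  have h4 : n - t + 1 + (t - 1) = n := by omega
  rw [h3, h4] at h2
  exact h2.symm

/-- Key structural lemma: after the deviation, the sorted sequence `f'` at any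
position past `r` equals `f` shifted appropriately around position `i`. -/
private lemma key_eq (n i r : ℕ) (f f' : ℕ → ℝ) (fnew : ℝ)
    (hf : ∀ a b, 1 ≤ a → a ≤ b → b ≤ n → f b ≤ f a)
    (hf' : ∀ a b, 1 ≤ a → a ≤ b → b ≤ n → f' b ≤ f' a)
    (hi1 : 1 ≤ i) (hin : i ≤ n) (hr1 : 1 ≤ r) (hrn : r ≤ n)
    (hfr : f' r = fnew)
    (hmult : (Finset.Icc 1 n).val.map f' =
        fnew ::ₘ ((Finset.Icc 1 n).val.map f).erase (f i)) :
    ∀ k, r < k → k ≤ n → f' k = if k ≤ i then f (k - 1) else f k := by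
  classical
  have hIcc : (Finset.Icc 1 n).val = (↑(List.range' 1 n) : Multiset ℕ) := by
    rw [Nat.Icc_eq_range']
    simp
  have hsplitr := split_range' r n hr1 hrn
  have hspliti := split_range' i n hi1 hin
  have hM' : (Finset.Icc 1 n).val.map f' = f' r ::ₘ
      (↑((List.range' 1 (r - 1)).map f' ++ (List.range' (r + 1) (n - r)).map f') : Multiset ℝ) := by
    rw [hIcc, hsplitr]
    simp [Multiset.cons_coe]
  have hM : (Finset.Icc 1 n).val.map f = f i ::ₘ
      (↑((List.range' 1 (i - 1)).map f ++ (List.range' (i + 1) (n - i)).map f) : Multiset ℝ) := by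
    rw [hIcc, hspliti]
    simp [Multiset.cons_coe]
  have hAB : (↑((List.range' 1 (r - 1)).map f' ++ (List.range' (r + 1) (n - r)).map f') : Multiset ℝ)
      = (↑((List.range' 1 (i - 1)).map f ++ (List.range' (i + 1) (n - i)).map f) : Multiset ℝ) := by
    have h1 := hmult
    rw [hM', hM, Multiset.erase_cons_head, hfr] at h1
    exact (Multiset.cons_inj_right fnew).mp h1
  have hAsorted : ((List.range' 1 (r - 1)).map f' ++ (List.range' (r + 1) (n - r)).map f').Pairwise (· ≥ ·) := by
    have hfull : ((List.range' 1 n).map f').Pairwise (· ≥ ·) :=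
      sorted_map_range' f' 1 n n (le_refl 1) (by omega) hf'
    rw [hsplitr, List.map_append] at hfull
    refine List.Pairwise.sublist ?_ hfull
    exact List.Sublist.append_left (by simp [List.sublist_cons_self]) _
  have hBsorted : ((List.range' 1 (i - 1)).map f ++ (List.range' (i + 1) (n - i)).map f).Pairwise (· ≥ ·) := by
    have hfull : ((List.range' 1 n).map f).Pairwise (· ≥ ·) :=
      sorted_map_range' f 1 n n (le_refl 1) (by omega) hf
    rw [hspliti, List.map_append] at hfull
    refine List.Pairwise.sublist ?_ hfull
    exact List.Sublist.append_left (by simp [List.sublist_cons_self]) _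
  have hABlist : ((List.range' 1 (r - 1)).map f' ++ (List.range' (r + 1) (n - r)).map f')
      = ((List.range' 1 (i - 1)).map f ++ (List.range' (i + 1) (n - i)).map f) :=
    (Multiset.coe_eq_coe.mp hAB).eq_of_pairwise' hAsorted hBsorted
  intro k hrk hkn
  have p1 : k - 2 < ((List.range' 1 (r - 1)).map f' ++ (List.range' (r + 1) (n - r)).map f').length := by
    simp; omega
  have p2 : k - 2 < ((List.range' 1 (i - 1)).map f ++ (List.range' (i + 1) (n - i)).map f).length := by
    simp; omega
  have hAk : ((List.range' 1 (r - 1)).map f' ++ (List.range' (r + 1) (n - r)).map f')[k - 2]'p1 = f' k := by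
    rw [List.getElem_append_right (by simp; omega)]
    simp only [List.getElem_map, List.getElem_range', List.length_map, List.length_range']
    congr 1
    omega
  have hBk : ((List.range' 1 (i - 1)).map f ++ (List.range' (i + 1) (n - i)).map f)[k - 2]'p2
      = if k ≤ i then f (k - 1) else f k := by
    by_cases hki : k ≤ i
    · rw [if_pos hki, List.getElem_append_left (by simp; omega)]
      simp only [List.getElem_map, List.getElem_range']
      congr 1
      omega
    · rw [if_neg hki, List.getElem_append_right (by simp; omega)]
      simp only [List.getElem_map, List.getElem_range', List.length_map, List.length_range']
      congr 1
      omega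
  have heq : ((List.range' 1 (r - 1)).map f' ++ (List.range' (r + 1) (n - r)).map f')[k - 2]'p1
      = ((List.range' 1 (i - 1)).map f ++ (List.range' (i + 1) (n - i)).map f)[k - 2]'p2 :=
    List.getElem_of_eq hABlist p1
  rw [← hAk, heq, hBk]

/-- **Prooφ is user dominant-strategy incentive compatible.**
For every user `i`, and every alternative bid `fnew` (with `f'` the re-sorted
bid sequence after the deviation, `r` the position of user `i`'s deviating
bid in the new order, and `ℓ'` the new number of allocated provers), user
`i`'s utility after deviating — `f i - f' (Sbar ℓ' + 1)` if allocated (rank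
`r ≤ Sbar ℓ'`), else `0` — is at most its honest utility — `f i - f (Sbar ℓ + 1)`
if `i ≤ Sbar ℓ`, else `0`. -/
theorem proofee_udsic
    (n N : ℕ) (f : ℕ → ℝ) (s : ℕ → ℕ) (p : ℕ → ℝ)
    (hf : ∀ a b, 1 ≤ a → a ≤ b → b ≤ n → f b ≤ f a)
    (hp : ∀ a b, 1 ≤ a → a ≤ b → b ≤ N → p a ≤ p b)
    (hs : ∀ j, 1 ≤ j → j ≤ N → 0 < s j)
    (Sbar : ℕ → ℕ) (hSbar : ∀ j, Sbar j = ∑ k ∈ Finset.Icc 1 j, s k)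
    (ℓ : ℕ) (hℓ1 : 1 ≤ ℓ) (hℓN : ℓ + 1 ≤ N) (hSn : Sbar ℓ + 1 ≤ n)
    (hℓ : p (ℓ + 1) ≤ f (Sbar ℓ + 1))
    (hℓmax : ∀ j, ℓ < j → j + 1 ≤ N → Sbar j + 1 ≤ n →
      f (Sbar j + 1) < p (j + 1))
    (i : ℕ) (hi1 : 1 ≤ i) (hin : i ≤ n) :
    ∀ (fnew : ℝ) (f' : ℕ → ℝ) (r ℓ' : ℕ),
      (∀ a b, 1 ≤ a → a ≤ b → b ≤ n → f' b ≤ f' a) →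
      (Finset.Icc 1 n).val.map f' =
        fnew ::ₘ ((Finset.Icc 1 n).val.map f).erase (f i) →
      (1 ≤ r ∧ r ≤ n ∧ f' r = fnew) →
      (1 ≤ ℓ' ∧ ℓ' + 1 ≤ N ∧ Sbar ℓ' + 1 ≤ n) →
      p (ℓ' + 1) ≤ f' (Sbar ℓ' + 1) →
      (∀ j, ℓ' < j → j + 1 ≤ N → Sbar j + 1 ≤ n →
        f' (Sbar j + 1) < p (j + 1)) →
      (if r ≤ Sbar ℓ' then f i - f' (Sbar ℓ' + 1) else 0) ≤
        (if i ≤ Sbar ℓ then f i - f (Sbar ℓ + 1) else 0) := by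
  intro fnew f' r ℓ' hf' hmult hr hℓ'h hp' hmax'
  obtain ⟨hr1, hrn, hfr⟩ := hr
  obtain ⟨hℓ'1, hℓ'N, hSn'⟩ := hℓ'h
  have hS1 : ∀ j, 1 ≤ j → 1 ≤ Sbar j := by
    intro j hj
    rw [hSbar]
    calc 1 ≤ s 1 := hs 1 le_rfl (by omega)
      _ ≤ ∑ k ∈ Finset.Icc 1 j, s k :=
        Finset.single_le_sum (fun k _ => Nat.zero_le _)
          (Finset.mem_Icc.mpr ⟨le_rfl, hj⟩)
  have hSmono : ∀ a b, a ≤ b → Sbar a ≤ Sbar b := by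
    intro a b hab
    rw [hSbar, hSbar]
    exact Finset.sum_le_sum_of_subset (Finset.Icc_subset_Icc_right hab)
  by_cases hralloc : r ≤ Sbar ℓ'
  · rw [if_pos hralloc]
    have hk := key_eq n i r f f' fnew hf hf' hi1 hin hr1 hrn hfr hmult
      (Sbar ℓ' + 1) (by omega) hSn'
    have hksub : Sbar ℓ' + 1 - 1 = Sbar ℓ' := by omega
    rw [hksub] at hk
    by_cases hialloc : i ≤ Sbar ℓ
    · rw [if_pos hialloc]
      have hle : f (Sbar ℓ + 1) ≤ f' (Sbar ℓ' + 1) := by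
        rcases le_or_gt ℓ' ℓ with hll | hll
        · have hmm : Sbar ℓ' ≤ Sbar ℓ := hSmono _ _ hll
          rw [hk]
          by_cases hc : Sbar ℓ' + 1 ≤ i
          · rw [if_pos hc]
            exact hf (Sbar ℓ') (Sbar ℓ + 1) (hS1 ℓ' hℓ'1) (by omega) hSn
          · rw [if_neg hc]
            exact hf (Sbar ℓ' + 1) (Sbar ℓ + 1) (by omega) (by omega) hSn
        · exfalso
          have hmm : Sbar ℓ ≤ Sbar ℓ' := hSmono _ _ (le_of_lt hll)
          have hc : ¬ (Sbar ℓ' + 1 ≤ i) := by omega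
          rw [if_neg hc] at hk
          have hmax := hℓmax ℓ' hll hℓ'N hSn'
          rw [hk] at hp'
          linarith
      linarith
    · rw [if_neg hialloc]
      push_neg at hialloc
      have hle : f i ≤ f' (Sbar ℓ' + 1) := by
        rw [hk]
        by_cases hc : Sbar ℓ' + 1 ≤ i
        · rw [if_pos hc]
          exact hf (Sbar ℓ') i (hS1 ℓ' hℓ'1) (by omega) hin
        · exfalso
          have hll : ℓ < ℓ' := by
            by_contra h
            push_neg at h
            have := hSmono ℓ' ℓ h
            omega
          have hmax := hℓmax ℓ' hll hℓ'N hSn'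
          rw [hk, if_neg hc] at hp'
          linarith
      linarith
  · rw [if_neg hralloc]
    by_cases hialloc : i ≤ Sbar ℓ
    · rw [if_pos hialloc]
      have := hf i (Sbar ℓ + 1) hi1 (by omega) hSn
      linarith
    · rw [if_neg hialloc]
end

section
/- In the Prooφ mechanism, suppose an allocated prover j changes its cost bid from p_j to some p with p > p_{ℓ+1}, keeping capacity and all other bids fixed. Then prover j is not allocated after the change and receives utility 0. -/
/-- **Prooφ, PDSIC proof, Case 1.2.**  An allocated prover `j` (rank `j ≤ ℓ`)
changes its cost bid to `pnew > p (ℓ+1)`, keeping its capacity and all other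
bids fixed.  After re-sorting (permutation `σ`, sorted costs `p'`, cumulative
capacities `S'`, new threshold `ℓ'`), prover `j` is no longer allocated
(`ℓ' < σ.symm j`) and its utility is `0`. -/
theorem proofee_pdsic_case_allocated_high_bid
    (n N : ℕ) (f : ℕ → ℝ) (s : ℕ → ℕ) (p : ℕ → ℝ)
    (hf : ∀ a b, 1 ≤ a → a ≤ b → b ≤ n → f b ≤ f a)
    (hp : ∀ a b, 1 ≤ a → a ≤ b → b ≤ N → p a ≤ p b)
    (hs : ∀ j, 1 ≤ j → j ≤ N → 0 < s j)
    (Sbar : ℕ → ℕ) (hSbar : ∀ j, Sbar j = ∑ k ∈ Finset.Icc 1 j, s k)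
    (ℓ : ℕ) (hℓ1 : 1 ≤ ℓ) (hℓN : ℓ + 1 ≤ N) (hSn : Sbar ℓ + 1 ≤ n)
    (hℓ : p (ℓ + 1) ≤ f (Sbar ℓ + 1))
    (hℓmax : ∀ k, ℓ < k → k + 1 ≤ N → Sbar k + 1 ≤ n →
      f (Sbar k + 1) < p (k + 1))
    -- the deviating allocated prover and its new cost bid
    (j : ℕ) (hj1 : 1 ≤ j) (hjℓ : j ≤ ℓ)
    (pnew : ℝ) (hpnew : p (ℓ + 1) < pnew)
    (q : ℕ → ℝ) (hq : ∀ k, q k = if k = j then pnew else p k)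
    (σ : Equiv.Perm ℕ) (hσ : ∀ k, k ∉ Finset.Icc 1 N → σ k = k)
    (p' : ℕ → ℝ) (hp'def : ∀ k, p' k = q (σ k))
    (hp' : ∀ a b, 1 ≤ a → a ≤ b → b ≤ N → p' a ≤ p' b)
    (S' : ℕ → ℕ) (hS' : ∀ k, S' k = ∑ i ∈ Finset.Icc 1 k, s (σ i))
    (ℓ' : ℕ) (hℓ'1 : 1 ≤ ℓ') (hℓ'N : ℓ' + 1 ≤ N) (hS'n : S' ℓ' + 1 ≤ n)
    (hℓ' : p' (ℓ' + 1) ≤ f (S' ℓ' + 1))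
    (hℓ'max : ∀ k, ℓ' < k → k + 1 ≤ N → S' k + 1 ≤ n →
      f (S' k + 1) < p' (k + 1)) :
    ℓ' < σ.symm j ∧
    (if σ.symm j ≤ ℓ' then (s j : ℝ) * (p' (ℓ' + 1) - p j) else 0) = 0 := by
  -- σ.symm maps Icc 1 N into itself
  have hsymmN : ∀ k : ℕ, k ∈ Finset.Icc 1 N → σ.symm k ∈ Finset.Icc 1 N := by
    intro k hk
    by_contra h
    have h1 : σ (σ.symm k) = σ.symm k := hσ _ h
    rw [Equiv.apply_symm_apply] at h1
    rw [← h1] at h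
    exact h hk
  have hjN : j ∈ Finset.Icc 1 N := Finset.mem_Icc.2 ⟨hj1, le_trans hjℓ (by omega)⟩
  have hrN : σ.symm j ∈ Finset.Icc 1 N := hsymmN j hjN
  have hmain : ℓ' < σ.symm j := by
    by_contra hcon
    push_neg at hcon   -- σ.symm j ≤ ℓ'
    have hpr : p' (σ.symm j) = pnew := by
      rw [hp'def, Equiv.apply_symm_apply, hq, if_pos rfl]
    -- every index in [1, ℓ+1] is allocated after re-sorting
    have hA : ∀ i, 1 ≤ i → i ≤ ℓ + 1 → σ.symm i ≤ ℓ' := by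
      intro i hi1 hi2
      have hiN : i ∈ Finset.Icc 1 N := Finset.mem_Icc.2 ⟨hi1, le_trans hi2 hℓN⟩
      by_cases hij : i = j
      · subst hij; exact hcon
      · by_contra hgt
        push_neg at hgt
        have hsi : σ.symm i ∈ Finset.Icc 1 N := hsymmN i hiN
        have hr1 : 1 ≤ σ.symm j := (Finset.mem_Icc.1 hrN).1
        have hle : p' (σ.symm j) ≤ p' (σ.symm i) :=
          hp' _ _ hr1 (le_trans hcon (le_of_lt hgt)) (Finset.mem_Icc.1 hsi).2
        have hval : p' (σ.symm i) = p i := by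
          rw [hp'def, Equiv.apply_symm_apply, hq, if_neg hij]
        have hpi : p i ≤ p (ℓ + 1) := hp i (ℓ + 1) hi1 hi2 hℓN
        rw [hpr, hval] at hle
        linarith
    -- m is the prover at rank ℓ'+1 after re-sorting
    set m := σ (ℓ' + 1) with hm
    have hsmm : σ.symm m = ℓ' + 1 := by rw [hm, Equiv.symm_apply_apply]
    have hmN : m ∈ Finset.Icc 1 N := by
      by_contra h
      have h1 : σ m = m := hσ _ h
      have h3 : σ.symm m = m := by
        conv_lhs => rw [← h1]
        rw [Equiv.symm_apply_apply]
      rw [h3] at hsmm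
      rw [hsmm] at h
      exact h (Finset.mem_Icc.2 ⟨by omega, hℓ'N⟩)
    have hmj : m ≠ j := by
      intro h; rw [h] at hsmm; omega
    have hmℓ : ℓ + 1 < m := by
      by_contra h
      push_neg at h
      have := hA m (Finset.mem_Icc.1 hmN).1 h
      omega
    -- c : least index ≤ m whose new rank exceeds ℓ'
    have hTne : m ∈ (Finset.Icc 1 m).filter (fun i => ℓ' < σ.symm i) :=
      Finset.mem_filter.2 ⟨Finset.mem_Icc.2 ⟨(Finset.mem_Icc.1 hmN).1, le_refl m⟩, by omega⟩
    set T := (Finset.Icc 1 m).filter (fun i => ℓ' < σ.symm i) with hT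
    have hTne' : T.Nonempty := ⟨m, hTne⟩
    set c := T.min' hTne' with hc
    have hcT : c ∈ T := T.min'_mem hTne'
    have hcm : c ≤ m := T.min'_le m hTne
    obtain ⟨hcIcc, hcgt⟩ := Finset.mem_filter.1 hcT
    obtain ⟨hc1, _⟩ := Finset.mem_Icc.1 hcIcc
    have hcℓ : ℓ + 2 ≤ c := by
      by_contra h
      push_neg at h
      have := hA c hc1 (by omega)
      omega
    have hsmall : ∀ i, 1 ≤ i → i < c → σ.symm i ≤ ℓ' := by
      intro i hi1 hic
      by_contra h
      push_neg at h
      have hiT : i ∈ T := Finset.mem_filter.2 ⟨Finset.mem_Icc.2 ⟨hi1, by omega⟩, h⟩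
      have := T.min'_le i hiT
      omega
    have hcN : c ≤ N := le_trans hcm (Finset.mem_Icc.1 hmN).2
    -- Sbar (c-1) ≤ S' ℓ'
    have hsum : Sbar (c - 1) ≤ S' ℓ' := by
      rw [hSbar, hS']
      have himg : ∑ i ∈ Finset.Icc 1 ℓ', s (σ i)
          = ∑ x ∈ (Finset.Icc 1 ℓ').image σ, s x := by
        rw [Finset.sum_image (fun a _ b _ hab => σ.injective hab)]
      rw [himg]
      apply Finset.sum_le_sum_of_subset
      intro i hi
      obtain ⟨hi1, hi2⟩ := Finset.mem_Icc.1 hi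
      have hiN : i ∈ Finset.Icc 1 N := Finset.mem_Icc.2 ⟨hi1, by omega⟩
      have hsi : σ.symm i ∈ Finset.Icc 1 N := hsymmN i hiN
      refine Finset.mem_image.2 ⟨σ.symm i, ?_, Equiv.apply_symm_apply σ i⟩
      exact Finset.mem_Icc.2 ⟨(Finset.mem_Icc.1 hsi).1, hsmall i hi1 (by omega)⟩
    have hSb : Sbar (c - 1) + 1 ≤ n := by omega
    have hmax := hℓmax (c - 1) (by omega) (by omega) hSb
    have hck : c - 1 + 1 = c := by omega
    rw [hck] at hmax
    have hpc : p c ≤ p m := hp c m hc1 hcm (Finset.mem_Icc.1 hmN).2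
    have hpm : p' (ℓ' + 1) = p m := by
      rw [hp'def, ← hm, hq, if_neg hmj]
    have hff : f (S' ℓ' + 1) ≤ f (Sbar (c - 1) + 1) := hf _ _ (by omega) (by omega) hS'n
    linarith
  refine ⟨hmain, ?_⟩
  rw [if_neg (by omega)]
end

section
/- The Prooφ mechanism is prover dominant-strategy incentive compatible with respect to cost bids: for every prover j, bidding its true unit cost p_j weakly maximizes its utility over all alternative cost bids p, holding its capacity and all other bids fixed. -/
/-- Auxiliary pigeonhole/rearrangement lemma: if `p'` is a sorted rearrangement
(via `σ`) of `p` with the single position `m ↦ j` excepted, then the sorted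
sequence obtained by deleting position `m` from `p'` is pointwise `≤` the one
obtained by deleting position `j` from `p`. -/
lemma proofee_aux (N m j : ℕ) (p p' : ℕ → ℝ) (σ : Equiv.Perm ℕ)
    (hσm : σ m = j) (hm1 : 1 ≤ m) (hmN : m ≤ N) (hj1 : 1 ≤ j) (hjN : j ≤ N)
    (hsymmmaps : ∀ b, 1 ≤ b → b ≤ N → 1 ≤ σ.symm b ∧ σ.symm b ≤ N)
    (hval : ∀ a, 1 ≤ a → a ≤ N → a ≠ m → p' a = p (σ a))
    (hpmono : ∀ a b, 1 ≤ a → a ≤ b → b ≤ N → p a ≤ p b)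
    (hp'mono : ∀ a b, 1 ≤ a → a ≤ b → b ≤ N → p' a ≤ p' b)
    (i : ℕ) (hi1 : 1 ≤ i) (hiN : i + 1 ≤ N) :
    (if i < m then p' i else p' (i + 1)) ≤ (if i < j then p i else p (i + 1)) := by
  classical
  set e : ℕ → ℕ := fun a => if a < j then a else a + 1 with he
  set B : Finset ℕ := (Finset.Icc 1 i).image (fun a => σ.symm (e a)) with hB
  have heN : ∀ a, 1 ≤ a → a ≤ i → 1 ≤ e a ∧ e a ≤ N := by
    intro a h1 h2; simp only [he]; split_ifs <;> omega
  have hBmem : ∀ c ∈ B, (1 ≤ c ∧ c ≤ N) ∧ c ≠ m ∧ ∃ a, 1 ≤ a ∧ a ≤ i ∧ σ c = e a := by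
    intro c hc
    simp only [hB, Finset.mem_image, Finset.mem_Icc] at hc
    obtain ⟨a, ⟨ha1, ha2⟩, rfl⟩ := hc
    obtain ⟨h1, h2⟩ := heN a ha1 ha2
    have hrange := hsymmmaps (e a) h1 h2
    have hej : e a ≠ j := by simp only [he]; split_ifs <;> omega
    refine ⟨hrange, ?_, a, ha1, ha2, σ.apply_symm_apply (e a)⟩
    intro hcm
    apply hej
    rw [← hσm, ← hcm]
    exact (σ.apply_symm_apply (e a)).symm
  have hBcard : B.card = i := by
    rw [hB, Finset.card_image_of_injOn, Nat.card_Icc]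
    · omega
    · intro a ha b hb hab
      simp only [Finset.coe_Icc, Set.mem_Icc] at ha hb
      have : e a = e b := σ.symm.injective hab
      simp only [he] at this; split_ifs at this <;> omega
  -- pigeonhole: some element of B is ≥ the deleted-index position of i
  have hex : ∃ c ∈ B, (if i < m then i else i + 1) ≤ c := by
    by_contra hcon
    push_neg at hcon
    rcases lt_or_ge i m with him | him
    · have hsub : B ⊆ Finset.Icc 1 (i - 1) := by
        intro c hc
        have h1 := (hBmem c hc).1.1
        have h2 := hcon c hc
        rw [if_pos him] at h2
        simp only [Finset.mem_Icc]; omega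
      have := Finset.card_le_card hsub
      rw [hBcard, Nat.card_Icc] at this; omega
    · have hsub : B ⊆ (Finset.Icc 1 i).erase m := by
        intro c hc
        obtain ⟨⟨h1, _⟩, hm, _⟩ := hBmem c hc
        have h2 := hcon c hc
        rw [if_neg (by omega)] at h2
        simp only [Finset.mem_erase, Finset.mem_Icc]
        exact ⟨hm, h1, by omega⟩
      have hmmem : m ∈ Finset.Icc 1 i := by simp only [Finset.mem_Icc]; omega
      have hcard2 : ((Finset.Icc 1 i).erase m).card = i - 1 := by
        rw [Finset.card_erase_of_mem hmmem, Nat.card_Icc]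
        omega
      have := Finset.card_le_card hsub
      omega
  obtain ⟨c, hcB, hci⟩ := hex
  obtain ⟨⟨hc1, hcN⟩, hcm, a, ha1, ha2, hσc⟩ := hBmem c hcB
  have step1 : (if i < m then p' i else p' (i + 1)) ≤ p' c := by
    split_ifs with h
    · exact hp'mono i c hi1 (by rw [if_pos h] at hci; omega) hcN
    · exact hp'mono (i + 1) c (by omega) (by rw [if_neg h] at hci; omega) hcN
  have step2 : p' c = p (e a) := by rw [hval c hc1 hcN hcm, hσc]
  have step3 : p (e a) ≤ (if i < j then p i else p (i + 1)) := by
    have h1 := heN a ha1 ha2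
    simp only [he]
    split_ifs with h2 h3 h3 <;>
      [exact hpmono a i ha1 ha2 (by omega);
       exact hpmono a (i + 1) ha1 (by omega) hiN;
       exact hpmono (a + 1) i (by omega) (by omega) (by omega);
       exact hpmono (a + 1) (i + 1) (by omega) (by omega) hiN]
  linarith

/-- **Prooφ is prover dominant-strategy incentive compatible w.r.t. cost bids.**
For every prover `j` and every alternative cost bid `pnew` (with `σ` the
re-sorting permutation of provers, `p'` the re-sorted costs, `S'` the new
cumulative capacities, and `ℓ'` the new allocation threshold), prover `j`'s
utility after deviating — `s j * (p' (ℓ'+1) - p j)` if allocated (new rank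
`σ.symm j ≤ ℓ'`), else `0` — is at most its honest utility —
`s j * (p (ℓ+1) - p j)` if `j ≤ ℓ`, else `0`. -/
theorem proofee_pdsic
    (n N : ℕ) (f : ℕ → ℝ) (s : ℕ → ℕ) (p : ℕ → ℝ)
    (hf : ∀ a b, 1 ≤ a → a ≤ b → b ≤ n → f b ≤ f a)
    (hp : ∀ a b, 1 ≤ a → a ≤ b → b ≤ N → p a ≤ p b)
    (hs : ∀ j, 1 ≤ j → j ≤ N → 0 < s j)
    (Sbar : ℕ → ℕ) (hSbar : ∀ j, Sbar j = ∑ k ∈ Finset.Icc 1 j, s k)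
    (ℓ : ℕ) (hℓ1 : 1 ≤ ℓ) (hℓN : ℓ + 1 ≤ N) (hSn : Sbar ℓ + 1 ≤ n)
    (hℓ : p (ℓ + 1) ≤ f (Sbar ℓ + 1))
    (hℓmax : ∀ k, ℓ < k → k + 1 ≤ N → Sbar k + 1 ≤ n →
      f (Sbar k + 1) < p (k + 1))
    (j : ℕ) (hj1 : 1 ≤ j) (hjN : j ≤ N) :
    ∀ (pnew : ℝ) (q p' : ℕ → ℝ) (σ : Equiv.Perm ℕ) (S' : ℕ → ℕ) (ℓ' : ℕ),
      (∀ k, q k = if k = j then pnew else p k) →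
      (∀ k, k ∉ Finset.Icc 1 N → σ k = k) →
      (∀ k, p' k = q (σ k)) →
      (∀ a b, 1 ≤ a → a ≤ b → b ≤ N → p' a ≤ p' b) →
      (∀ k, S' k = ∑ i ∈ Finset.Icc 1 k, s (σ i)) →
      (1 ≤ ℓ' ∧ ℓ' + 1 ≤ N ∧ S' ℓ' + 1 ≤ n) →
      p' (ℓ' + 1) ≤ f (S' ℓ' + 1) →
      (∀ k, ℓ' < k → k + 1 ≤ N → S' k + 1 ≤ n →
        f (S' k + 1) < p' (k + 1)) →
      (if σ.symm j ≤ ℓ' then (s j : ℝ) * (p' (ℓ' + 1) - p j) else 0) ≤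
        (if j ≤ ℓ then (s j : ℝ) * (p (ℓ + 1) - p j) else 0) := by
  intro pnew q p' σ S' ℓ' hq hσfix hp' hp'mono hS' hℓ'rng hth' hmax'
  obtain ⟨hℓ'1, hℓ'N, hS'n⟩ := hℓ'rng
  classical
  -- σ maps [1,N] into itself, and so does σ.symm
  have hσmaps : ∀ a, 1 ≤ a → a ≤ N → 1 ≤ σ a ∧ σ a ≤ N := by
    intro a ha1 haN
    by_contra h
    have h1 : σ a ∉ Finset.Icc 1 N := by simp only [Finset.mem_Icc]; omega
    have h2 := hσfix (σ a) h1
    have h3 : σ a = a := σ.injective h2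
    rw [h3] at h1
    simp only [Finset.mem_Icc] at h1; omega
  have hσsymmmaps : ∀ b, 1 ≤ b → b ≤ N → 1 ≤ σ.symm b ∧ σ.symm b ≤ N := by
    intro b hb1 hbN
    by_contra h
    have h1 : σ.symm b ∉ Finset.Icc 1 N := by simp only [Finset.mem_Icc]; omega
    have h2 := hσfix (σ.symm b) h1
    rw [Equiv.apply_symm_apply] at h2
    rw [← h2] at h1
    simp only [Finset.mem_Icc] at h1; omega
  set m := σ.symm j with hm
  have hσm : σ m = j := by rw [hm, Equiv.apply_symm_apply]
  obtain ⟨hm1, hmN⟩ := hσsymmmaps j hj1 hjN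
  -- values of p' away from m
  have hp'val : ∀ a, 1 ≤ a → a ≤ N → a ≠ m → p' a = p (σ a) := by
    intro a _ _ ham
    rw [hp' a, hq]
    rw [if_neg]
    intro h
    exact ham (by rw [hm, ← h, Equiv.symm_apply_apply])
  have hpval : ∀ a, 1 ≤ a → a ≤ N → a ≠ j → p a = p' (σ.symm a) := by
    intro a _ _ haj
    rw [hp' (σ.symm a), Equiv.apply_symm_apply, hq, if_neg haj]
  have hσsymmmaps' : ∀ b, 1 ≤ b → b ≤ N → 1 ≤ σ.symm.symm b ∧ σ.symm.symm b ≤ N := by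
    simpa using hσmaps
  -- the rearrangement equality
  have hE : ∀ i, 1 ≤ i → i + 1 ≤ N →
      (if i < m then p' i else p' (i + 1)) = (if i < j then p i else p (i + 1)) := by
    intro i h1 h2
    refine le_antisymm
      (proofee_aux N m j p p' σ hσm hm1 hmN hj1 hjN hσsymmmaps hp'val hp hp'mono i h1 h2)
      (proofee_aux N j m p' p σ.symm rfl hj1 hjN hm1 hmN
        hσsymmmaps' hpval hp'mono hp i h1 h2)
  by_cases hma : σ.symm j ≤ ℓ'
  · -- allocated after deviating
    have hma' : m ≤ ℓ' := hma
    rw [if_pos hma]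
    have hrr : p' (ℓ' + 1) = (if ℓ' < j then p ℓ' else p (ℓ' + 1)) := by
      have h := hE ℓ' hℓ'1 hℓ'N
      rwa [if_neg (by omega : ¬ ℓ' < m)] at h
    have hkey : p' (ℓ' + 1) ≤ (if j ≤ ℓ then p (ℓ + 1) else p j) := by
      rcases lt_or_ge ℓ' j with h1 | h1
      · rw [if_pos h1] at hrr
        rw [hrr]
        split_ifs with hjl
        · exact hp ℓ' (ℓ + 1) hℓ'1 (by omega) hℓN
        · exact hp ℓ' j hℓ'1 (by omega) hjN
      · rw [if_neg (not_lt.mpr h1)] at hrr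
        by_cases h2 : ℓ' ≤ ℓ
        · rw [hrr, if_pos (le_trans h1 h2)]
          exact hp (ℓ' + 1) (ℓ + 1) (by omega) (by omega) hℓN
        · -- contradiction branch
          by_contra hcon
          push_neg at hcon
          set k₀ := if j ≤ ℓ then ℓ + 1 else j with hk₀
          have hpk₀ : p k₀ = (if j ≤ ℓ then p (ℓ + 1) else p j) := by
            rw [hk₀, apply_ite p]
          have hk₀rng : ℓ + 1 ≤ k₀ ∧ k₀ ≤ N := by
            rw [hk₀]; split_ifs <;> omega
          set A : Finset ℕ := (Finset.Icc 1 ℓ').image σ with hA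
          have hAcard : A.card = ℓ' := by
            rw [hA, Finset.card_image_of_injective _ σ.injective, Nat.card_Icc]
            omega
          have hjA : j ∈ A := by
            rw [hA, Finset.mem_image]
            exact ⟨m, by simp only [Finset.mem_Icc]; omega, hσm⟩
          have hsub : Finset.Icc 1 k₀ ⊆ A := by
            intro i hi
            simp only [Finset.mem_Icc] at hi
            by_contra hiA
            have hiN : i ≤ N := le_trans hi.2 hk₀rng.2
            have hij : i ≠ j := fun h => hiA (h ▸ hjA)
            have hpre : ℓ' + 1 ≤ σ.symm i := by
              by_contra h
              push_neg at h
              apply hiA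
              rw [hA, Finset.mem_image]
              refine ⟨σ.symm i, ?_, by rw [Equiv.apply_symm_apply]⟩
              simp only [Finset.mem_Icc]
              exact ⟨(hσsymmmaps i hi.1 hiN).1, by omega⟩
            have h5 : p i = p' (σ.symm i) := hpval i hi.1 hiN hij
            have h6 : p' (ℓ' + 1) ≤ p' (σ.symm i) :=
              hp'mono _ _ (by omega) hpre (hσsymmmaps i hi.1 hiN).2
            have h7 : p i ≤ p k₀ := hp i k₀ hi.1 hi.2 hk₀rng.2
            rw [← hpk₀] at hcon
            linarith
          have hne : (Finset.Icc 1 N \ A).Nonempty := by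
            rw [Finset.sdiff_nonempty]
            intro h
            have := Finset.card_le_card h
            rw [hAcard, Nat.card_Icc] at this
            omega
          set c := (Finset.Icc 1 N \ A).min' hne with hc
          have hcmem := Finset.min'_mem (Finset.Icc 1 N \ A) hne
          rw [Finset.mem_sdiff, Finset.mem_Icc] at hcmem
          obtain ⟨⟨hc1, hcN⟩, hcA⟩ := hcmem
          have hck₀ : k₀ < c := by
            by_contra h
            push_neg at h
            exact hcA (hsub (by simp only [Finset.mem_Icc]; omega))
          have hsub2 : Finset.Icc 1 (c - 1) ⊆ A := by
            intro i hi
            simp only [Finset.mem_Icc] at hi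
            by_contra hiA
            have : c ≤ i := Finset.min'_le _ i
              (by rw [Finset.mem_sdiff, Finset.mem_Icc]; exact ⟨⟨hi.1, by omega⟩, hiA⟩)
            omega
          have hkℓ' : c - 1 ≤ ℓ' := by
            have := Finset.card_le_card hsub2
            rw [hAcard, Nat.card_Icc] at this
            omega
          have hSle : Sbar (c - 1) ≤ S' ℓ' := by
            rw [hSbar, hS']
            calc ∑ k ∈ Finset.Icc 1 (c - 1), s k
                ≤ ∑ k ∈ A, s k :=
                  Finset.sum_le_sum_of_subset hsub2
              _ = ∑ i ∈ Finset.Icc 1 ℓ', s (σ i) := by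
                  rw [hA, Finset.sum_image (fun x _ y _ h => σ.injective h)]
          have hmax := hℓmax (c - 1) (by omega) (by omega) (by omega)
          have hceq : c - 1 + 1 = c := by omega
          rw [hceq] at hmax
          have h8 : p c ≤ p (ℓ' + 1) := hp c (ℓ' + 1) hc1 (by omega) (by omega)
          have h9 : f (S' ℓ' + 1) ≤ f (Sbar (c - 1) + 1) :=
            hf (Sbar (c - 1) + 1) (S' ℓ' + 1) (by omega) (by omega) hS'n
          rw [← hpk₀] at hcon
          rw [hrr] at hth' hcon
          linarith
    split_ifs with hjl
    · rw [if_pos hjl] at hkey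
      have h0 : (0 : ℝ) ≤ (s j : ℝ) := Nat.cast_nonneg _
      nlinarith
    · rw [if_neg hjl] at hkey
      have h0 : (0 : ℝ) ≤ (s j : ℝ) := Nat.cast_nonneg _
      nlinarith
  · rw [if_neg hma]
    split_ifs with hjl
    · have h1 : p j ≤ p (ℓ + 1) := hp j (ℓ + 1) hj1 (by omega) hℓN
      have h0 : (0 : ℝ) ≤ (s j : ℝ) := Nat.cast_nonneg _
      nlinarith
    · exact le_refl 0
end

section
/- There exists a market configuration in which a prover strictly profits by underreporting its capacity in the Prooφ mechanism: with 8 tasks of values (10,10,10,10,9,9,1,1) and 3 provers with (capacity, cost) bids (4,0), (2,1), (2,10), honest bidding yields ℓ = 1 and prover 1 gets utility 4, whereas if prover 1 bids capacity 1 instead of 4 (keeping cost 0), then ℓ = 2 and prover 1's utility becomes 10. -/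
/-- **Capacity underreporting can be profitable in Prooφ.**
With 8 tasks of values `(10,10,10,10,9,9,1,1)` and 3 provers with
(capacity, cost) bids `(4,0), (2,1), (2,10)`:
honest bidding yields `ℓ = 1` (prover 1 is allocated in full, utility
`4·(p 2 − 0) = 4`), whereas if prover 1 bids capacity `1` instead of `4`
(keeping cost `0`), then `ℓ = 2` and prover 1's utility is
`1·(p 3 − 0) = 10 > 4`. -/
theorem proofee_capacity_underreport_profitable :
    let f : ℕ → ℝ := fun i => if i ≤ 4 then 10 else if i ≤ 6 then 9 else 1
    let p : ℕ → ℝ := fun j => if j = 1 then 0 else if j = 2 then 1 else 10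
    let s : ℕ → ℕ := fun j => if j = 1 then 4 else 2
    let s' : ℕ → ℕ := fun j => if j = 1 then 1 else 2
    let Sbar : (ℕ → ℕ) → ℕ → ℕ := fun c j => ∑ k ∈ Finset.Icc 1 j, c k
    -- honest bidding: ℓ = 1
    (p 2 ≤ f (Sbar s 1 + 1)) ∧
    (∀ j, 1 < j → j + 1 ≤ 3 → ¬ (p (j + 1) ≤ f (Sbar s j + 1))) ∧
    -- honest utility of prover 1
    ((s 1 : ℝ) * (p 2 - p 1) = 4) ∧
    -- underreported capacity: ℓ = 2
    (p 3 ≤ f (Sbar s' 2 + 1)) ∧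
    -- deviant utility of prover 1
    ((s' 1 : ℝ) * (p 3 - p 1) = 10) ∧
    (4 : ℝ) < 10 := by
  refine ⟨by norm_num, ?_, by norm_num, by norm_num [Finset.sum_Icc_succ_top], by norm_num, by norm_num⟩
  intro j hj hj3
  have : j = 2 := by omega
  subst this
  norm_num [Finset.sum_Icc_succ_top]
end

section
/- There exists a market configuration where a prover profits by submitting Sybil user bids in the Prooφ mechanism: with 8 tasks of values (10,10,10,2,2,2,2,2) and provers (4,0), (2,2), (2,9), honest behavior gives ℓ = 1 and prover 1 utility 8; if prover 1 additionally submits 4 fake user tasks with fee 9, then ℓ = 2 and prover 1's net utility (payment minus cost of paying for its 3 allocated fake tasks) is 9 > 8. -/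
/-- **Sybil user bids can be profitable in Prooφ.**
With 8 tasks of values `(10,10,10,2,2,2,2,2)` and provers
`(4,0), (2,2), (2,9)`: honestly `ℓ = 1` and prover 1's utility is
`4·(p 2 − 0) = 8`.  If prover 1 additionally submits 4 fake user tasks with
fee `9` (giving the sorted fee sequence `(10,10,10,9,9,9,9,2,2,2,2,2)`),
then `ℓ = 2`; prover 1 is paid `4·p 3 = 36`, and 3 of its fake tasks are
allocated, each charged `f' 7 = 9`, so its net utility is `36 − 27 = 9 > 8`. -/
theorem proofee_user_sybil_profitable :
    let f : ℕ → ℝ := fun i => if i ≤ 3 then 10 else 2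
    let f' : ℕ → ℝ := fun i => if i ≤ 3 then 10 else if i ≤ 7 then 9 else 2
    let p : ℕ → ℝ := fun j => if j = 1 then 0 else if j = 2 then 2 else 9
    let s : ℕ → ℕ := fun j => if j = 1 then 4 else 2
    let Sbar : ℕ → ℕ := fun j => ∑ k ∈ Finset.Icc 1 j, s k
    -- honest bidding: ℓ = 1
    (p 2 ≤ f (Sbar 1 + 1)) ∧
    (∀ j, 1 < j → j + 1 ≤ 3 → ¬ (p (j + 1) ≤ f (Sbar j + 1))) ∧
    -- honest utility of prover 1
    ((s 1 : ℝ) * (p 2 - p 1) = 8) ∧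
    -- with the 4 Sybil tasks of fee 9: ℓ = 2
    (p 3 ≤ f' (Sbar 2 + 1)) ∧
    -- net Sybil utility: payment minus cost minus charges for 3 allocated fakes
    ((s 1 : ℝ) * (p 3 - p 1) - 3 * f' (Sbar 2 + 1) = 9) ∧
    (8 : ℝ) < 9 := by
  refine ⟨by norm_num, ?_, by norm_num, by norm_num [Finset.sum_Icc_succ_top], by norm_num [Finset.sum_Icc_succ_top], by norm_num⟩
  intro j hj hj3
  have : j = 2 := by omega
  subst this
  norm_num [Finset.sum_Icc_succ_top]
end

section
/- There exists a market configuration where a prover profits by splitting into Sybil provers: with 8 tasks, 3 of value 10 and 5 of value 3, and provers (4,0), (2,2), (2,9), honest bidding gives ℓ = 1 and prover 2 gets utility 0; if prover 2 splits into two Sybil provers with bids (1,2) and (1,3), then ℓ = 2 and the split with bid (1,2) is allocated, giving prover 2 total utility 1. -/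
/-- **Prover Sybil splitting can be profitable in Prooφ.**
With 8 tasks (3 of value `10`, 5 of value `3`) and provers
`(4,0), (2,2), (2,9)`: honest bidding gives `ℓ = 1` and prover 2 (with true
cost `2`) gets utility `0`.  If prover 2 splits into two Sybil provers with
bids `(1,2)` and `(1,3)` (new sorted prover list `(4,0),(1,2),(1,3),(2,9)`),
then `ℓ = 2`, the split with bid `(1,2)` is allocated at unit price `q 3 = 3`,
and prover 2's total utility becomes `1·(3 − 2) = 1 > 0`. -/
theorem proofee_prover_sybil_profitable :
    let f : ℕ → ℝ := fun i => if i ≤ 3 then 10 else 3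
    let p : ℕ → ℝ := fun j => if j = 1 then 0 else if j = 2 then 2 else 9
    let s : ℕ → ℕ := fun j => if j = 1 then 4 else 2
    let Sbar : ℕ → ℕ := fun j => ∑ k ∈ Finset.Icc 1 j, s k
    let q : ℕ → ℝ := fun j => if j = 1 then 0 else if j = 2 then 2 else
      if j = 3 then 3 else 9
    let t : ℕ → ℕ := fun j => if j = 1 then 4 else if j ≤ 3 then 1 else 2
    let T : ℕ → ℕ := fun j => ∑ k ∈ Finset.Icc 1 j, t k
    (p 2 ≤ f (Sbar 1 + 1)) ∧
    (∀ j, 1 < j → j + 1 ≤ 3 → ¬ (p (j + 1) ≤ f (Sbar j + 1))) ∧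
    (q 3 ≤ f (T 2 + 1)) ∧
    (∀ j, 2 < j → j + 1 ≤ 4 → ¬ (q (j + 1) ≤ f (T j + 1))) ∧
    ((t 2 : ℝ) * (q 3 - p 2) = 1) ∧
    (0 : ℝ) < 1 := by
  have h12 : Finset.Icc 1 2 = ({1,2} : Finset ℕ) := by decide
  have h13 : Finset.Icc 1 3 = ({1,2,3} : Finset ℕ) := by decide
  have h11 : Finset.Icc 1 1 = ({1} : Finset ℕ) := by decide
  refine ⟨by norm_num [h11], ?_, by norm_num [h12], ?_, by norm_num, by norm_num⟩
  · intro j h1 h2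
    have : j = 2 := by omega
    subst this
    norm_num [h12]
  · intro j h1 h2
    have : j = 3 := by omega
    subst this
    norm_num [h13]
end

section
/- In the Prooφ mechanism, if an unallocated prover j (rank greater than ℓ) splits into Sybil provers and the split is strictly profitable, then social welfare strictly increases: the number of allocated tasks after the split satisfies S̄'_{ℓ'} > S̄_ℓ, and the new threshold price satisfies p'_{ℓ'+1} > p_{ℓ+1}. -/
/-- **Profitable Sybil splits of an unallocated prover increase welfare
(Prop. "sybil-good", second case).**  An unallocated prover `j` (rank
`ℓ < j ≤ N`, so `p (ℓ+1) ≤ p j`) splits its capacity into Sybil provers with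
capacities summing to `s j`; after re-sorting, the new prover list is
`(q, t)` of length `N - 1 + r`, the splits occupy positions `A`, and `ℓ'` is
the new threshold.  If the split is strictly profitable for prover `j` (its
total utility over allocated splits, at true unit cost `p j`, is positive),
then the number of allocated tasks strictly increases
(`Sbar ℓ < S' ℓ'`) and the new threshold price strictly increases
(`p (ℓ+1) < q (ℓ'+1)`); hence social welfare increases. -/
theorem proofee_prover_sybil_profitable_increases_welfare
    (n N : ℕ) (f : ℕ → ℝ) (s : ℕ → ℕ) (p : ℕ → ℝ)
    (hf : ∀ a b, 1 ≤ a → a ≤ b → b ≤ n → f b ≤ f a)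
    (hp : ∀ a b, 1 ≤ a → a ≤ b → b ≤ N → p a ≤ p b)
    (hs : ∀ k, 1 ≤ k → k ≤ N → 0 < s k)
    (Sbar : ℕ → ℕ) (hSbar : ∀ k, Sbar k = ∑ i ∈ Finset.Icc 1 k, s i)
    (ℓ : ℕ) (hℓ1 : 1 ≤ ℓ) (hℓN : ℓ + 1 ≤ N) (hSn : Sbar ℓ + 1 ≤ n)
    (hℓ : p (ℓ + 1) ≤ f (Sbar ℓ + 1))
    (hℓmax : ∀ k, ℓ < k → k + 1 ≤ N → Sbar k + 1 ≤ n →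
      f (Sbar k + 1) < p (k + 1))
    -- the splitting unallocated prover
    (j : ℕ) (hjℓ : ℓ < j) (hjN : j ≤ N)
    -- the r splits: costs pc, capacities sc summing to s j
    (r : ℕ) (hr : 1 ≤ r) (pc : ℕ → ℝ) (sc : ℕ → ℕ)
    (hsc : ∀ k, 1 ≤ k → k ≤ r → 0 < sc k)
    (hsum : (∑ k ∈ Finset.Icc 1 r, sc k) = s j)
    -- the re-sorted prover list after the split
    (q : ℕ → ℝ) (t : ℕ → ℕ)
    (hq : ∀ a b, 1 ≤ a → a ≤ b → b ≤ N - 1 + r → q a ≤ q b)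
    (hmul : (Finset.Icc 1 (N - 1 + r)).val.map (fun k => (q k, t k)) =
      ((Finset.Icc 1 N).erase j).val.map (fun k => (p k, s k)) +
        (Finset.Icc 1 r).val.map (fun k => (pc k, sc k)))
    -- positions of the splits in the new order
    (A : Finset ℕ) (hA : A ⊆ Finset.Icc 1 (N - 1 + r))
    (hAval : A.val.map (fun k => (q k, t k)) =
      (Finset.Icc 1 r).val.map (fun k => (pc k, sc k)))
    (S' : ℕ → ℕ) (hS' : ∀ k, S' k = ∑ i ∈ Finset.Icc 1 k, t i)
    -- the new allocation threshold
    (ℓ' : ℕ) (hℓ'1 : 1 ≤ ℓ') (hℓ'N : ℓ' + 1 ≤ N - 1 + r) (hS'n : S' ℓ' + 1 ≤ n)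
    (hℓ' : q (ℓ' + 1) ≤ f (S' ℓ' + 1))
    (hℓ'max : ∀ k, ℓ' < k → k + 1 ≤ N - 1 + r → S' k + 1 ≤ n →
      f (S' k + 1) < q (k + 1))
    -- the split is strictly profitable for prover j
    (hprofit : 0 < ∑ k ∈ A ∩ Finset.Icc 1 ℓ', (t k : ℝ) * (q (ℓ' + 1) - p j)) :
    Sbar ℓ < S' ℓ' ∧ p (ℓ + 1) < q (ℓ' + 1) := by

  classical
  set c : ℝ := q (ℓ' + 1) with hcdef
  set T : ℕ := ∑ k ∈ A ∩ Finset.Icc 1 ℓ', t k with hTdef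
  -- rewrite profit as (T : ℝ) * (c - p j)
  have hprof' : 0 < (T : ℝ) * (c - p j) := by
    have : ∑ k ∈ A ∩ Finset.Icc 1 ℓ', (t k : ℝ) * (q (ℓ' + 1) - p j)
        = (T : ℝ) * (c - p j) := by
      rw [hTdef, ← Finset.sum_mul]
      push_cast
      ring
    linarith [hprofit, this ▸ hprofit]
  have hTnn : (0:ℝ) ≤ (T : ℝ) := Nat.cast_nonneg T
  have hc : p j < c := by
    by_contra h
    push_neg at h
    nlinarith
  have hT : 0 < T := by
    by_contra h
    push_neg at h
    interval_cases T
    simp at hprof'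
  -- p (ℓ+1) ≤ p j
  have hpj : p (ℓ + 1) ≤ p j := hp (ℓ + 1) j (by omega) (by omega) hjN
  have hgoal2 : p (ℓ + 1) < q (ℓ' + 1) := by
    rw [← hcdef] at *
    linarith
  refine ⟨?_, hgoal2⟩
  -- the counting function
  set F : ℝ × ℕ → ℕ := fun pr => if pr.1 < c then pr.2 else 0 with hFdef
  -- sum identity from the multiset equality
  have key : ∑ k ∈ Finset.Icc 1 (N - 1 + r), F (q k, t k)
      = ∑ i ∈ (Finset.Icc 1 N).erase j, F (p i, s i)
        + ∑ k ∈ Finset.Icc 1 r, F (pc k, sc k) := by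
    have h1 := congrArg (fun m : Multiset (ℝ × ℕ) => (m.map F).sum) hmul
    simp only [Multiset.map_add, Multiset.sum_add, Multiset.map_map] at h1
    exact h1
  have keyA : ∑ k ∈ A, F (q k, t k) = ∑ k ∈ Finset.Icc 1 r, F (pc k, sc k) := by
    have h1 := congrArg (fun m : Multiset (ℝ × ℕ) => (m.map F).sum) hAval
    simp only [Multiset.map_map] at h1
    exact h1
  have hsd : ∑ k ∈ Finset.Icc 1 (N - 1 + r) \ A, F (q k, t k)
      + ∑ k ∈ A, F (q k, t k)
      = ∑ k ∈ Finset.Icc 1 (N - 1 + r), F (q k, t k) := Finset.sum_sdiff hA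
  have hC : ∑ k ∈ Finset.Icc 1 (N - 1 + r) \ A, F (q k, t k)
      = ∑ i ∈ (Finset.Icc 1 N).erase j, F (p i, s i) := by omega
  -- lower bound on the original side
  have hsubset : Finset.Icc 1 ℓ ⊆ (Finset.Icc 1 N).erase j := by
    intro i hi
    simp only [Finset.mem_Icc] at hi
    simp only [Finset.mem_erase, Finset.mem_Icc]
    omega
  have hFs : ∀ i ∈ Finset.Icc 1 ℓ, F (p i, s i) = s i := by
    intro i hi
    simp only [Finset.mem_Icc] at hi
    have hple : p i ≤ p (ℓ + 1) := hp i (ℓ + 1) hi.1 (by omega) (by omega)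
    have hpi : p i < c := by linarith
    exact if_pos hpi
  have hlow : Sbar ℓ ≤ ∑ i ∈ (Finset.Icc 1 N).erase j, F (p i, s i) := by
    calc Sbar ℓ = ∑ i ∈ Finset.Icc 1 ℓ, s i := hSbar ℓ
      _ = ∑ i ∈ Finset.Icc 1 ℓ, F (p i, s i) := (Finset.sum_congr rfl hFs).symm
      _ ≤ _ := Finset.sum_le_sum_of_subset hsubset
  -- upper bound on the new side
  have hup : ∑ k ∈ Finset.Icc 1 (N - 1 + r) \ A, F (q k, t k)
      ≤ ∑ k ∈ Finset.Icc 1 ℓ' \ A, t k := by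
    have hstep : ∑ k ∈ Finset.Icc 1 (N - 1 + r) \ A, F (q k, t k)
        ≤ ∑ k ∈ Finset.Icc 1 (N - 1 + r) \ A,
            (if k ∈ Finset.Icc 1 ℓ' then t k else 0) := by
      refine Finset.sum_le_sum ?_
      intro k hk
      simp only [Finset.mem_sdiff, Finset.mem_Icc] at hk
      by_cases h : q k < c
      · have hkle : k ≤ ℓ' := by
          by_contra hgt
          push_neg at hgt
          have := hq (ℓ' + 1) k (by omega) (by omega) (by omega)
          rw [← hcdef] at this
          linarith
        have h1 : F (q k, t k) = t k := if_pos h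
        have h2 : (if k ∈ Finset.Icc 1 ℓ' then t k else 0) = t k :=
          if_pos (Finset.mem_Icc.mpr ⟨hk.1.1, hkle⟩)
        rw [h1, h2]
      · have h1 : F (q k, t k) = 0 := if_neg h
        rw [h1]
        exact Nat.zero_le _
    have heq : ∑ k ∈ Finset.Icc 1 (N - 1 + r) \ A,
          (if k ∈ Finset.Icc 1 ℓ' then t k else 0)
        = ∑ k ∈ Finset.Icc 1 ℓ' \ A, t k := by
      rw [Finset.sum_ite_mem]
      refine Finset.sum_congr ?_ (fun _ _ => rfl)
      ext k
      simp only [Finset.mem_inter, Finset.mem_sdiff, Finset.mem_Icc]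
      constructor
      · rintro ⟨⟨_, hkA⟩, hk2⟩; exact ⟨hk2, hkA⟩
      · rintro ⟨hk2, hkA⟩; exact ⟨⟨⟨hk2.1, by omega⟩, hkA⟩, hk2⟩
    omega
  -- split S' ℓ'
  have hsplit : ∑ i ∈ Finset.Icc 1 ℓ' ∩ A, t i + ∑ i ∈ Finset.Icc 1 ℓ' \ A, t i
      = ∑ i ∈ Finset.Icc 1 ℓ', t i := Finset.sum_inter_add_sum_sdiff _ _ _
  have hTeq : T = ∑ i ∈ Finset.Icc 1 ℓ' ∩ A, t i := by
    rw [hTdef, Finset.inter_comm]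
  have hS'ℓ' := hS' ℓ'
  omega
end

section
/- In the Prooφ mechanism, when a single user changes its bid while all other bids are fixed, the number of allocated provers cannot increase beyond what holding the bid at or above the original threshold would give: formally, if user i lowers its bid (f < f_i), then for every ℓ* > ℓ, the re-sorted fee at position S̄_{ℓ*}+1 satisfies f'_{S̄_{ℓ*}+1} ≤ f_{S̄_{ℓ*}+1}, and hence ℓ' ≤ ℓ. -/
/-!
Position `k` of a decreasingly sorted sequence holds a value above `x` iff at least `k` of its
values exceed `x`. Replacing one bid by a smaller one can only lower, for every threshold `x`, the
number of bids above `x`; hence the re-sorted sequence lies termwise below the original. If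
`ℓ' > ℓ`, then at position `S̄_{ℓ'} + 1` this gives `p_{ℓ'+1} ≤ f'_{S̄_{ℓ'}+1} ≤ f_{S̄_{ℓ'}+1}`,
contradicting the maximality of `ℓ`.
-/

open Finset

theorem Multiset.countP_cons_erase_le_s17 {α : Type*} [DecidableEq α] (P : α → Prop) [DecidablePred P]
    {m : Multiset α} {a b : α} (ha : a ∈ m) (hab : P b → P a) :
    (b ::ₘ m.erase a).countP P ≤ m.countP P := by
  conv_rhs => rw [← Multiset.cons_erase ha]
  rw [Multiset.countP_cons, Multiset.countP_cons]
  by_cases hb : P b <;> simp [hb, hab]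

theorem Finset.card_filter_eq_countP_map {ι α : Type*} (s : Finset ι) (f : ι → α) (P : α → Prop)
    [DecidablePred P] : #{j ∈ s | P (f j)} = (s.val.map f).countP P := by
  rw [Multiset.countP_map, card_def, filter_val]

section Antitone

variable {f : ℕ → ℝ} {n k : ℕ}

/-- The indices of the values above `x` form an initial segment of `[1, n]`. -/
theorem AntitoneOn.lt_iff_le_card_filter_lt (hf : AntitoneOn f (Set.Icc 1 n)) (hk : k ∈ Icc 1 n)
    (x : ℝ) : x < f k ↔ k ≤ #{j ∈ Icc 1 n | x < f j} := by
  rw [mem_Icc] at hk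
  constructor
  · intro hx
    calc k = #(Icc 1 k) := by simp
      _ ≤ #{j ∈ Icc 1 n | x < f j} := card_le_card fun j hj => by
        rw [mem_Icc] at hj
        simp only [mem_filter, mem_Icc]
        exact ⟨⟨hj.1, hj.2.trans hk.2⟩,
          hx.trans_le (hf ⟨hj.1, hj.2.trans hk.2⟩ ⟨hk.1, hk.2⟩ hj.2)⟩
  · intro hcard
    by_contra! hx
    have hsub : {j ∈ Icc 1 n | x < f j} ⊆ Icc 1 (k - 1) := fun j hj => by
      simp only [mem_filter, mem_Icc] at hj ⊢
      refine ⟨hj.1.1, ?_⟩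
      by_contra! hjk
      exact (hf ⟨hk.1, hk.2⟩ ⟨hj.1.1, hj.1.2⟩ (by omega)).not_gt (hx.trans_lt hj.2)
    have := card_le_card hsub
    simp only [Nat.card_Icc] at this
    omega

theorem AntitoneOn.le_of_card_filter_lt_le {f' : ℕ → ℝ} (hf : AntitoneOn f (Set.Icc 1 n))
    (hf' : AntitoneOn f' (Set.Icc 1 n))
    (hcount : ∀ x, #{j ∈ Icc 1 n | x < f' j} ≤ #{j ∈ Icc 1 n | x < f j})
    (hk : k ∈ Icc 1 n) : f' k ≤ f k := by
  by_contra! hlt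
  have := (hf'.lt_iff_le_card_filter_lt hk (f k)).1 hlt
  exact lt_irrefl _ ((hf.lt_iff_le_card_filter_lt hk (f k)).2 (this.trans (hcount _)))

end Antitone

theorem proofee_lower_bid_no_more_provers_general
    (n N : ℕ) (f : ℕ → ℝ) (p : ℕ → ℝ)
    (hf : ∀ a b, 1 ≤ a → a ≤ b → b ≤ n → f b ≤ f a)
    (Sbar : ℕ → ℕ)
    (ℓ : ℕ)
    (hℓmax : ∀ j, ℓ < j → j + 1 ≤ N → Sbar j + 1 ≤ n →
      f (Sbar j + 1) < p (j + 1))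
    -- user i lowers its bid
    (i : ℕ) (hi1 : 1 ≤ i) (hin : i ≤ n)
    (fnew : ℝ) (hfnew : fnew < f i)
    -- re-sorted fee sequence after the deviation
    (f' : ℕ → ℝ)
    (hf' : ∀ a b, 1 ≤ a → a ≤ b → b ≤ n → f' b ≤ f' a)
    (hmul : (Finset.Icc 1 n).val.map f' =
      fnew ::ₘ ((Finset.Icc 1 n).val.map f).erase (f i))
    -- the new allocation threshold
    (ℓ' : ℕ) (hℓ'N : ℓ' + 1 ≤ N) (hS'n : Sbar ℓ' + 1 ≤ n)
    (hℓ' : p (ℓ' + 1) ≤ f' (Sbar ℓ' + 1)) :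
    (∀ l, ℓ < l → l + 1 ≤ N → Sbar l + 1 ≤ n →
      f' (Sbar l + 1) ≤ f (Sbar l + 1)) ∧
    ℓ' ≤ ℓ := by
  classical
  have hfi : f i ∈ (Icc 1 n).val.map f := Multiset.mem_map_of_mem f (mem_Icc.2 ⟨hi1, hin⟩)
  have hdom : ∀ k ∈ Icc 1 n, f' k ≤ f k := fun k =>
    AntitoneOn.le_of_card_filter_lt_le (fun a ha b hb hab => hf a b ha.1 hab hb.2)
      (fun a ha b hb hab => hf' a b ha.1 hab hb.2) fun x => by
        rw [card_filter_eq_countP_map, card_filter_eq_countP_map, hmul]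
        exact Multiset.countP_cons_erase_le_s17 _ hfi hfnew.trans'
  refine ⟨fun l _ _ hl => hdom _ (mem_Icc.2 ⟨by omega, hl⟩), ?_⟩
  by_contra! hℓℓ'
  linarith [hℓmax ℓ' hℓℓ' hℓ'N hS'n, hdom _ (mem_Icc.2 ⟨by omega, hS'n⟩)]

/-- **Lowering a user bid cannot increase the number of allocated provers.**
If user `i` lowers its bid from `f i` to `fnew < f i` (all other bids
unchanged, `f'` the re-sorted fee sequence, `ℓ'` the new threshold), then for
every `ℓ* > ℓ` the re-sorted fee at position `Sbar ℓ* + 1` satisfies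
`f' (Sbar ℓ* + 1) ≤ f (Sbar ℓ* + 1)`, and hence `ℓ' ≤ ℓ`. -/
theorem proofee_lower_bid_no_more_provers
    (n N : ℕ) (f : ℕ → ℝ) (s : ℕ → ℕ) (p : ℕ → ℝ)
    (hf : ∀ a b, 1 ≤ a → a ≤ b → b ≤ n → f b ≤ f a)
    (hp : ∀ a b, 1 ≤ a → a ≤ b → b ≤ N → p a ≤ p b)
    (hs : ∀ j, 1 ≤ j → j ≤ N → 0 < s j)
    (Sbar : ℕ → ℕ) (hSbar : ∀ j, Sbar j = ∑ k ∈ Finset.Icc 1 j, s k)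
    (ℓ : ℕ) (hℓ1 : 1 ≤ ℓ) (hℓN : ℓ + 1 ≤ N) (hSn : Sbar ℓ + 1 ≤ n)
    (hℓ : p (ℓ + 1) ≤ f (Sbar ℓ + 1))
    (hℓmax : ∀ j, ℓ < j → j + 1 ≤ N → Sbar j + 1 ≤ n →
      f (Sbar j + 1) < p (j + 1))
    -- user i lowers its bid
    (i : ℕ) (hi1 : 1 ≤ i) (hin : i ≤ n)
    (fnew : ℝ) (hfnew : fnew < f i)
    -- re-sorted fee sequence after the deviation
    (f' : ℕ → ℝ)
    (hf' : ∀ a b, 1 ≤ a → a ≤ b → b ≤ n → f' b ≤ f' a)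
    (hmul : (Finset.Icc 1 n).val.map f' =
      fnew ::ₘ ((Finset.Icc 1 n).val.map f).erase (f i))
    -- the new allocation threshold
    (ℓ' : ℕ) (hℓ'1 : 1 ≤ ℓ') (hℓ'N : ℓ' + 1 ≤ N) (hS'n : Sbar ℓ' + 1 ≤ n)
    (hℓ' : p (ℓ' + 1) ≤ f' (Sbar ℓ' + 1))
    (hℓ'max : ∀ j, ℓ' < j → j + 1 ≤ N → Sbar j + 1 ≤ n →
      f' (Sbar j + 1) < p (j + 1)) :
    (∀ l, ℓ < l → l + 1 ≤ N → Sbar l + 1 ≤ n →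
      f' (Sbar l + 1) ≤ f (Sbar l + 1)) ∧
    ℓ' ≤ ℓ :=
  proofee_lower_bid_no_more_provers_general n N f p hf Sbar ℓ hℓmax i hi1 hin fnew hfnew f' hf' hmul
    ℓ' hℓ'N hS'n hℓ'
end
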